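/- arXiv:2501.10655 — 2 statements merged into one kernel-verified Lean document; each statement's English description precedes it below -/
import Mathlib

section
/- Let n > 0 be a real number and p₁, p₂ ∈ (0, 1]. Let NB_{p₁} and NB_{p₂} denote the probability measures on the nonnegative integers with probability mass functions x ↦ Γ(x+n)/(Γ(x+1)·Γ(n)) · p_iⁿ · (1−p_i)ˣ for i = 1, 2. Then the total variation distance satisfies TV(NB_{p₁}, NB_{p₂}) ≤ 1 − exp(−n·|(1−p₁)/p₁ − (1−p₂)/p₂|). -/
/-!
Both distributions are normalized by the negative binomial series
`∑ₓ (n+x-1 choose x) qˣ = (1-q)⁻ⁿ`. For `p₂ ≤ p₁` the ratio `NB_{p₂}(x) / NB_{p₁}(x)` is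
`(p₂/p₁)ⁿ ((1-p₂)/(1-p₁))ˣ ≥ (p₂/p₁)ⁿ ≥ exp(-n (1/p₂ - 1/p₁))`, and a pointwise bound
`c · P ≤ Q` between probability mass functions gives `|P(A) - Q(A)| ≤ 1 - c`, since both
`(1-c) P(A)` and `(Q - cP)(A)` lie in `[0, 1-c]`.
-/

/-- The negative binomial probability mass function with real parameters `n > 0`
and `p ∈ (0,1]`. -/
noncomputable def nbPMF (n p : ℝ) (x : ℕ) : ℝ :=
  Real.Gamma (x + n) / (Real.Gamma (x + 1) * Real.Gamma n) * p ^ n * (1 - p) ^ x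

open Polynomial

theorem Real.Gamma_add_nat_eq_eval_ascPochhammer_mul {z : ℝ} (hz : ∀ m : ℕ, z ≠ -m) (k : ℕ) :
    Real.Gamma (z + k) = (ascPochhammer ℝ k).eval z * Real.Gamma z := by
  induction k with
  | zero => simp
  | succ k ih =>
    have hzk : z + k ≠ 0 := fun h => hz k (eq_neg_of_add_eq_zero_left h)
    rw [Nat.cast_succ, ← add_assoc, Real.Gamma_add_one hzk, ih, ascPochhammer_succ_eval]
    ring

theorem Ring.choose_add_nat_sub_one_eq {R : Type*} [Field R] [CharZero R] (a : R) (k : ℕ) :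
    Ring.choose (a + k - 1) k = (ascPochhammer R k).eval a / k.factorial := by
  rw [Ring.choose_eq_smul, descPochhammer_smeval_eq_ascPochhammer, ascPochhammer_smeval_eq_eval,
    smul_eq_mul, inv_mul_eq_div]
  congr 2
  ring

theorem Ring.choose_add_nat_sub_one_pos {R : Type*} [Field R] [LinearOrder R]
    [IsStrictOrderedRing R] {a : R} (ha : 0 < a) (k : ℕ) : 0 < Ring.choose (a + k - 1) k := by
  rw [Ring.choose_add_nat_sub_one_eq]
  exact div_pos (ascPochhammer_pos k a ha) (by positivity)

theorem Real.hasSum_choose_mul_pow {a q : ℝ} (hq : |q| < 1) :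
    HasSum (fun k : ℕ => Ring.choose (a + k - 1) k * q ^ k) ((1 - q) ^ (-a)) := by
  have := (Real.one_div_one_sub_rpow_hasFPowerSeriesOnBall_zero a).hasSum (y := q)
    (by simpa [Metric.mem_eball, enorm_eq_nnnorm, ← NNReal.coe_lt_one] using hq)
  simp only [FormalMultilinearSeries.ofScalars_apply_eq, smul_eq_mul, zero_add] at this
  rwa [Real.rpow_neg (by linarith [le_abs_self q]), inv_eq_one_div]

theorem nbPMF_eq_choose {n : ℝ} (hn : 0 < n) (p : ℝ) (x : ℕ) :
    nbPMF n p x = p ^ n * (Ring.choose (n + x - 1) x * (1 - p) ^ x) := by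
  have hΓ := Real.Gamma_add_nat_eq_eval_ascPochhammer_mul
    (fun m h => by linarith [(m.cast_nonneg : (0:ℝ) ≤ m)]) x
  rw [nbPMF, Ring.choose_add_nat_sub_one_eq, add_comm (x : ℝ) n, hΓ, Real.Gamma_nat_eq_factorial]
  field_simp [(Real.Gamma_pos_of_pos hn).ne']

theorem nbPMF_nonneg {n p : ℝ} (hn : 0 < n) (hp : p ∈ Set.Ioc (0 : ℝ) 1) (x : ℕ) :
    0 ≤ nbPMF n p x := by
  have : 0 ≤ 1 - p := sub_nonneg.2 hp.2
  have := Ring.choose_add_nat_sub_one_pos hn x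
  have := Real.rpow_nonneg hp.1.le n
  rw [nbPMF_eq_choose hn]
  positivity

theorem hasSum_nbPMF {n p : ℝ} (hn : 0 < n) (hp : p ∈ Set.Ioc (0 : ℝ) 1) :
    HasSum (nbPMF n p) 1 := by
  have hq : |1 - p| < 1 := by rw [abs_lt]; constructor <;> linarith [hp.1, hp.2]
  have h := (Real.hasSum_choose_mul_pow (a := n) hq).mul_left (p ^ n)
  rwa [sub_sub_cancel, ← Real.rpow_add hp.1, add_neg_cancel, Real.rpow_zero,
    ← funext (nbPMF_eq_choose hn p)] at h

theorem abs_tsum_subtype_sub_le_of_mul_le {α : Type*} {f g : α → ℝ} {c : ℝ}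
    (hf : HasSum f 1) (hg : HasSum g 1) (hf0 : ∀ x, 0 ≤ f x) (hfg : ∀ x, c * f x ≤ g x)
    (A : Set α) :
    |(∑' x : A, f x) - ∑' x : A, g x| ≤ 1 - c := by
  have hgf : HasSum (fun x => g x - c * f x) (1 - c) := by
    simpa using hg.sub (hf.mul_left c)
  have hc : c ≤ 1 := by linarith [hgf.nonneg fun x => sub_nonneg.2 (hfg x)]
  have hfA : ∑' x : A, f x ≤ 1 := hf.tsum_eq ▸ hf.summable.tsum_subtype_le f A hf0
  have hfA0 : 0 ≤ ∑' x : A, f x := tsum_nonneg fun x => hf0 x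
  have hgfA : ∑' x : A, (g x - c * f x) ≤ 1 - c :=
    hgf.tsum_eq ▸ hgf.summable.tsum_subtype_le _ A fun x => sub_nonneg.2 (hfg x)
  have hgfA0 : 0 ≤ ∑' x : A, (g x - c * f x) := tsum_nonneg fun x => sub_nonneg.2 (hfg x)
  have hsplit : ∑' x : A, g x = ∑' x : A, (g x - c * f x) + c * ∑' x : A, f x := by
    have hgfS : Summable fun x : A => g x - c * f x := hgf.summable.subtype A
    have hfS : Summable fun x : A => f x := hf.summable.subtype A
    rw [← tsum_mul_left, ← hgfS.tsum_add (hfS.mul_left c)]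
    simp
  rw [hsplit, abs_le]
  constructor <;> nlinarith

theorem Real.log_div_le_inv_sub_inv {a b : ℝ} (ha : 0 < a) (hab : a ≤ b) (hb : b ≤ 1) :
    Real.log (b / a) ≤ a⁻¹ - b⁻¹ := by
  have hb0 : 0 < b := ha.trans_le hab
  calc Real.log (b / a) ≤ b / a - 1 := Real.log_le_sub_one_of_pos (by positivity)
    _ = b * (a⁻¹ - b⁻¹) := by field_simp
    _ ≤ a⁻¹ - b⁻¹ := mul_le_of_le_one_left (sub_nonneg.2 (inv_anti₀ ha hab)) hb

theorem Real.exp_neg_mul_inv_sub_inv_le_rpow {n a b : ℝ} (hn : 0 ≤ n) (ha : 0 < a) (hab : a ≤ b)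
    (hb : b ≤ 1) :
    Real.exp (-(n * (a⁻¹ - b⁻¹))) ≤ (a / b) ^ n := by
  have hb0 : 0 < b := ha.trans_le hab
  rw [Real.rpow_def_of_pos (by positivity), ← inv_div, Real.log_inv]
  exact Real.exp_le_exp.2 (by nlinarith [Real.log_div_le_inv_sub_inv ha hab hb])

theorem rpow_div_mul_nbPMF_le {n p₁ p₂ : ℝ} (hn : 0 < n) (hp₂ : 0 < p₂) (hle : p₂ ≤ p₁)
    (hp₁ : p₁ ≤ 1) (x : ℕ) :
    (p₂ / p₁) ^ n * nbPMF n p₁ x ≤ nbPMF n p₂ x := by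
  have hp₁0 : 0 < p₁ := hp₂.trans_le hle
  rw [nbPMF_eq_choose hn, nbPMF_eq_choose hn, ← mul_assoc, Real.div_rpow hp₂.le hp₁0.le,
    div_mul_cancel₀ _ (Real.rpow_pos_of_pos hp₁0 n).ne']
  have := Ring.choose_add_nat_sub_one_pos hn x
  gcongr

/-- Total variation bound between two negative binomial distributions with the same
`n`: for every set `A` of nonnegative integers,
`|NB_{p₁}(A) − NB_{p₂}(A)| ≤ 1 − exp(−n |(1−p₁)/p₁ − (1−p₂)/p₂|)`. -/
theorem negBinomial_tv_bound (n p₁ p₂ : ℝ) (hn : 0 < n)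
    (hp₁ : p₁ ∈ Set.Ioc (0 : ℝ) 1) (hp₂ : p₂ ∈ Set.Ioc (0 : ℝ) 1) :
    ∀ A : Set ℕ,
      |(∑' x : A, nbPMF n p₁ x) - ∑' x : A, nbPMF n p₂ x| ≤
        1 - Real.exp (-(n * |(1 - p₁) / p₁ - (1 - p₂) / p₂|)) := by
  intro A
  wlog hle : p₂ ≤ p₁ generalizing p₁ p₂
  · rw [abs_sub_comm, abs_sub_comm ((1 - p₁) / p₁)]
    exact this p₂ p₁ hp₂ hp₁ (le_of_not_ge hle)
  have hgap : (1 - p₂) / p₂ - (1 - p₁) / p₁ = p₂⁻¹ - p₁⁻¹ := by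
    field_simp [hp₁.1.ne', hp₂.1.ne']
    ring
  rw [abs_sub_comm ((1 - p₁) / p₁), hgap, abs_of_nonneg (sub_nonneg.2 (inv_anti₀ hp₂.1 hle))]
  refine abs_tsum_subtype_sub_le_of_mul_le (hasSum_nbPMF hn hp₁) (hasSum_nbPMF hn hp₂)
    (nbPMF_nonneg hn hp₁) (fun x => ?_) A
  calc Real.exp (-(n * (p₂⁻¹ - p₁⁻¹))) * nbPMF n p₁ x ≤ (p₂ / p₁) ^ n * nbPMF n p₁ x := by
        gcongr
        · exact nbPMF_nonneg hn hp₁ x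
        · exact Real.exp_neg_mul_inv_sub_inv_le_rpow hn.le hp₂.1 hle hp₁.2
    _ ≤ nbPMF n p₂ x := rpow_div_mul_nbPMF_le hn hp₂.1 hle hp₁.2 x
end

section
/- Let μ₁, μ₂ ≥ 0 and let P_{μ₁}, P_{μ₂} denote the Poisson probability measures on the nonnegative integers with means μ₁ and μ₂, i.e., with probability mass functions x ↦ e^{−μ_i}·μ_iˣ/x!. Then the total variation distance satisfies TV(P_{μ₁}, P_{μ₂}) ≤ 1 − exp(−|μ₁ − μ₂|). -/
/-- The Poisson probability mass function with mean `μ ≥ 0`. -/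
noncomputable def poissonPMF (μ : ℝ) (x : ℕ) : ℝ :=
  Real.exp (-μ) * μ ^ x / Nat.factorial x

/-!
If `μ₁ ≤ μ₂`, then `e^{-(μ₂ - μ₁)} P_{μ₁}(x) ≤ P_{μ₂}(x)` pointwise. For two probability mass
functions with `c p ≤ q` pointwise, `P(A) - Q(A) ≤ (1 - c) P(A) ≤ 1 - c`, and the reverse
difference `Q(A) - P(A) = P(Aᶜ) - Q(Aᶜ)` obeys the same bound.
-/

section MassFunction

variable {α : Type*} {p q : α → ℝ} {c : ℝ}

lemma le_one_of_mul_le_of_hasSum_one (hp : HasSum p 1) (hq : HasSum q 1)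
    (hpq : ∀ x, c * p x ≤ q x) : c ≤ 1 := by
  simpa using hasSum_le hpq (hp.mul_left c) hq

lemma tsum_subtype_sub_le_of_mul_le (hp_nonneg : ∀ x, 0 ≤ p x) (hp : HasSum p 1)
    (hq : HasSum q 1) (hpq : ∀ x, c * p x ≤ q x) (A : Set α) :
    ∑' x : A, p x - ∑' x : A, q x ≤ 1 - c := by
  have hc : c ≤ 1 := le_one_of_mul_le_of_hasSum_one hp hq hpq
  have hPA_nonneg : 0 ≤ ∑' x : A, p x := tsum_nonneg fun x => hp_nonneg x
  have hPA_le : ∑' x : A, p x ≤ 1 :=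
    hp.tsum_eq ▸ hp.summable.tsum_subtype_le p A hp_nonneg
  have hQA : c * ∑' x : A, p x ≤ ∑' x : A, q x := by
    rw [← tsum_mul_left]
    exact Summable.tsum_le_tsum (fun x => hpq x) ((hp.summable.subtype A).mul_left c)
      (hq.summable.subtype A)
  nlinarith

lemma tsum_subtype_eq_one_sub_tsum_compl {f : α → ℝ} (hf : HasSum f 1) (A : Set α) :
    ∑' x : A, f x = 1 - ∑' x : (Aᶜ : Set α), f x := by
  rw [← hf.tsum_eq, ← hf.summable.tsum_subtype_add_tsum_subtype_compl A, add_sub_cancel_right]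

lemma abs_tsum_subtype_sub_le_of_mul_le_s13 (hp_nonneg : ∀ x, 0 ≤ p x) (hp : HasSum p 1)
    (hq : HasSum q 1) (hpq : ∀ x, c * p x ≤ q x) (A : Set α) :
    |∑' x : A, p x - ∑' x : A, q x| ≤ 1 - c := by
  refine abs_sub_le_iff.mpr ⟨tsum_subtype_sub_le_of_mul_le hp_nonneg hp hq hpq A, ?_⟩
  rw [tsum_subtype_eq_one_sub_tsum_compl hp, tsum_subtype_eq_one_sub_tsum_compl hq]
  linarith [tsum_subtype_sub_le_of_mul_le hp_nonneg hp hq hpq Aᶜ]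

end MassFunction

lemma poissonPMF_nonneg {μ : ℝ} (hμ : 0 ≤ μ) (x : ℕ) : 0 ≤ poissonPMF μ x := by
  unfold poissonPMF
  positivity

lemma hasSum_poissonPMF (μ : ℝ) : HasSum (poissonPMF μ) 1 := by
  unfold poissonPMF
  have h := (NormedSpace.expSeries_div_hasSum_exp μ).mul_left (Real.exp (-μ))
  rw [← Real.exp_eq_exp_ℝ, ← Real.exp_add, neg_add_cancel, Real.exp_zero] at h
  simpa only [mul_div_assoc] using h

lemma exp_neg_sub_mul_poissonPMF_le {μ₁ μ₂ : ℝ} (hμ₁ : 0 ≤ μ₁) (h : μ₁ ≤ μ₂)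
    (x : ℕ) :
    Real.exp (-(μ₂ - μ₁)) * poissonPMF μ₁ x ≤ poissonPMF μ₂ x := by
  have hrescale :
      Real.exp (-(μ₂ - μ₁)) * poissonPMF μ₁ x = Real.exp (-μ₂) * μ₁ ^ x / x.factorial := by
    rw [poissonPMF, ← mul_div_assoc, ← mul_assoc, ← Real.exp_add]
    ring_nf
  rw [hrescale, poissonPMF]
  gcongr

/-- Total variation bound between two Poisson distributions: for every set `A` of
nonnegative integers, `|P_{μ₁}(A) − P_{μ₂}(A)| ≤ 1 − exp(−|μ₁ − μ₂|)`. -/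
theorem poisson_tv_bound (μ₁ μ₂ : ℝ) (hμ₁ : 0 ≤ μ₁) (hμ₂ : 0 ≤ μ₂) :
    ∀ A : Set ℕ,
      |(∑' x : A, poissonPMF μ₁ x) - ∑' x : A, poissonPMF μ₂ x| ≤
        1 - Real.exp (-|μ₁ - μ₂|) := by
  intro A
  wlog h : μ₁ ≤ μ₂ generalizing μ₁ μ₂
  · rw [abs_sub_comm, abs_sub_comm μ₁]
    exact this μ₂ μ₁ hμ₂ hμ₁ (le_of_not_ge h)
  rw [abs_of_nonpos (sub_nonpos.mpr h), neg_sub]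
  exact abs_tsum_subtype_sub_le_of_mul_le_s13 (poissonPMF_nonneg hμ₁) (hasSum_poissonPMF μ₁)
    (hasSum_poissonPMF μ₂) (exp_neg_sub_mul_poissonPMF_le hμ₁ h) A
end
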